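/- For all integers r ≥ 0 and t ≥ 0, E(r,t) = (1-p)·∑_{j=0}^{t-1} β_p(j,r), and moreover E(r,t) = (1-p)·( min{r,t} + ∑_{j=r}^{t-1} β_p(j,r) ), where empty sums are 0. -/

import Mathlib

/-- `betaP p t r = ∑_{i=0}^{r-1} C(t,i) (1-p)^i p^(t-i)`. -/
noncomputable def betaP (p : ℝ) (t r : ℕ) : ℝ :=
  ∑ i ∈ Finset.range r, (t.choose i : ℝ) * (1 - p) ^ i * p ^ (t - i)

/-- Expected rank function `E(r,t) = ∑_{i=0}^{t} C(t,i) (1-p)^i p^(t-i) * min{i,r}`. -/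
noncomputable def expRank (p : ℝ) (r t : ℕ) : ℝ :=
  ∑ i ∈ Finset.range (t + 1),
    (t.choose i : ℝ) * (1 - p) ^ i * p ^ (t - i) * ((min i r : ℕ) : ℝ)

/-!
Write `X_t` for a binomial variable with `t` trials and success probability `1 - p`, so that
`E(r,t)` is the expectation of `min(X_t, r)`. Pascal's rule says that `X_{t+1}` is `X_t` or
`X_t + 1` with probabilities `p` and `1 - p`, and `min(X_t + 1, r) - min(X_t, r)` is the indicator
of `X_t < r`, whose expectation is `β_p(t,r)`. Hence `E(r,t+1) = E(r,t) + (1-p) β_p(t,r)`, which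
telescopes to the first formula. For `j < r` the sum `β_p(j,r)` is the full binomial sum `1`, which
gives the second.
-/

open Finset

theorem Finset.sum_range_succ_choose_mul_pow_mul {R : Type*} [CommRing R] (x y : R) (g : ℕ → R)
    (n : ℕ) :
    ∑ i ∈ range (n + 2), ((n + 1).choose i : R) * x ^ i * y ^ (n + 1 - i) * g i =
      y * ∑ i ∈ range (n + 1), (n.choose i : R) * x ^ i * y ^ (n - i) * g i +
        x * ∑ i ∈ range (n + 1), (n.choose i : R) * x ^ i * y ^ (n - i) * g (i + 1) := by
  have hsplit := sum_choose_succ_mul (fun i j => x ^ i * y ^ j * g i) n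
  simp only [← mul_assoc] at hsplit
  rw [hsplit, mul_sum, mul_sum]
  congr 1 <;> refine sum_congr rfl fun i hi => ?_
  · rw [Nat.succ_sub (Nat.lt_succ_iff.mp (mem_range.mp hi)), pow_succ]
    ring
  · ring

theorem betaP_eq_sum_range_succ (p : ℝ) (t r : ℕ) :
    betaP p t r = ∑ i ∈ range (t + 1),
      if i < r then (t.choose i : ℝ) * (1 - p) ^ i * p ^ (t - i) else 0 := by
  rw [← sum_filter, betaP, ← sum_filter_of_ne (p := (· < t + 1))]
  · congr 1
    ext i
    simp only [mem_filter, mem_range]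
    omega
  · intro i _ hi
    by_contra! hti
    exact hi (by rw [Nat.choose_eq_zero_of_lt hti]; simp)

theorem betaP_eq_one_of_lt (p : ℝ) {j r : ℕ} (hjr : j < r) : betaP p j r = 1 := by
  rw [betaP_eq_sum_range_succ]
  calc ∑ i ∈ range (j + 1), (if i < r then (j.choose i : ℝ) * (1 - p) ^ i * p ^ (j - i) else 0)
      = ((1 - p) + p) ^ j := by
        rw [add_pow]
        refine sum_congr rfl fun i hi => ?_
        rw [if_pos (by rw [mem_range] at hi; omega)]
        ring
    _ = 1 := by simp

theorem expRank_succ (p : ℝ) (r t : ℕ) :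
    expRank p r (t + 1) = expRank p r t + (1 - p) * betaP p t r := by
  have hmin (i : ℕ) : ((min (i + 1) r : ℕ) : ℝ) = (min i r : ℕ) + if i < r then 1 else 0 := by
    split_ifs with hir
    · rw [show min (i + 1) r = min i r + 1 by omega, Nat.cast_succ]
    · rw [show min (i + 1) r = min i r by omega, add_zero]
  have hshift : ∑ i ∈ range (t + 1),
      (t.choose i : ℝ) * (1 - p) ^ i * p ^ (t - i) * ((min (i + 1) r : ℕ) : ℝ) =
        expRank p r t + betaP p t r := by
    simp only [hmin, mul_add, mul_ite, mul_one, mul_zero, sum_add_distrib, expRank,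
      betaP_eq_sum_range_succ]
  rw [expRank, sum_range_succ_choose_mul_pow_mul, hshift, ← expRank]
  ring

theorem expRank_eq_sum_betaP (p : ℝ) (r t : ℕ) :
    expRank p r t = (1 - p) * ∑ j ∈ range t, betaP p j r := by
  induction t with
  | zero => simp [expRank]
  | succ t ih => rw [expRank_succ, ih, sum_range_succ, mul_add]

theorem sum_range_betaP_eq_min_add_sum_Ico (p : ℝ) (r t : ℕ) :
    ∑ j ∈ range t, betaP p j r = ((min r t : ℕ) : ℝ) + ∑ j ∈ Ico r t, betaP p j r := by
  rcases le_total r t with hrt | htr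
  · rw [← sum_range_add_sum_Ico _ hrt, min_eq_left hrt,
      sum_congr rfl fun j hj => betaP_eq_one_of_lt p (mem_range.mp hj)]
    simp
  · rw [Ico_eq_empty_of_le htr, min_eq_right htr,
      sum_congr rfl fun j hj => betaP_eq_one_of_lt p ((mem_range.mp hj).trans_le htr)]
    simp

theorem stmt8_general (p : ℝ) (r t : ℕ) :
    expRank p r t = (1 - p) * ∑ j ∈ Finset.range t, betaP p j r ∧
    expRank p r t =
      (1 - p) * (((min r t : ℕ) : ℝ) + ∑ j ∈ Finset.Ico r t, betaP p j r) := by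
  rw [← sum_range_betaP_eq_min_add_sum_Ico, and_self]
  exact expRank_eq_sum_betaP p r t

theorem stmt8 (p : ℝ) (hp0 : 0 < p) (hp1 : p < 1) (r t : ℕ) :
    expRank p r t = (1 - p) * ∑ j ∈ Finset.range t, betaP p j r ∧
    expRank p r t =
      (1 - p) * (((min r t : ℕ) : ℝ) + ∑ j ∈ Finset.Ico r t, betaP p j r) :=
  stmt8_general p r t
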